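/- arXiv:1703.03066 — 7 statements merged into one kernel-verified Lean document; each statement's English description precedes it below -/
import Mathlib

section
/- Let X be a dense subspace of a compact Hausdorff space cX, and let f : cX → dX be a continuous surjection onto a compact Hausdorff space dX that restricts to a homeomorphism of X onto its image, with f(X) dense in dX. If X is an F_σδ subset of dX, then X is an F_σδ subset of cX. -/
open Set Topology Filter

/-- A set is `F_σ` if it is a countable union of closed sets. -/
def IsFSigma {X : Type*} [TopologicalSpace X] (A : Set X) : Prop :=
  ∃ F : ℕ → Set X, (∀ n, IsClosed (F n)) ∧ A = ⋃ n, F n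

/-- A set is `F_σδ` if it is a countable intersection of countable unions of closed sets. -/
def IsFSigmaDelta {X : Type*} [TopologicalSpace X] (A : Set X) : Prop :=
  ∃ F : ℕ → ℕ → Set X, (∀ n m, IsClosed (F n m)) ∧ A = ⋂ n, ⋃ m, F n m

theorem eq_of_mem_closure_of_isInducing_domRestrict {α β : Type*} [TopologicalSpace α] [T2Space α]
    [TopologicalSpace β] {f : α → β} {s : Set α} (hf : Continuous f)
    (hs : IsInducing (s.domRestrict f)) {x p : α} (hx : x ∈ s) (hp : p ∈ closure s)
    (hfp : f p = f x) : p = x := by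
  -- Approach `p` from within `s`: the images tend to `f p = f x`, hence the points tend to `x`.
  have : (comap ((↑) : s → α) (𝓝 p)).NeBot := mem_closure_iff_comap_neBot.mp hp
  have htend_p : Tendsto ((↑) : s → α) (comap (↑) (𝓝 p)) (𝓝 p) := tendsto_comap
  have htend_x : Tendsto (fun y : s => y) (comap (↑) (𝓝 p)) (𝓝 ⟨x, hx⟩) :=
    hs.tendsto_nhds_iff.mpr <| by
      show Tendsto (f ∘ ((↑) : s → α)) _ (𝓝 (f x))
      exact hfp ▸ (hf.tendsto p).comp htend_p
  exact tendsto_nhds_unique htend_p ((continuous_subtype_val.tendsto _).comp htend_x)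

theorem Dense.preimage_image_eq_of_isInducing_domRestrict {α β : Type*} [TopologicalSpace α]
    [T2Space α] [TopologicalSpace β] {f : α → β} {s : Set α} (hs : Dense s)
    (hf : Continuous f) (hind : IsInducing (s.domRestrict f)) : f ⁻¹' (f '' s) = s := by
  refine (subset_preimage_image f s).antisymm' ?_
  rintro p ⟨x, hx, hfx⟩
  rwa [eq_of_mem_closure_of_isInducing_domRestrict hf hind hx (hs p) hfx.symm]

theorem IsFSigmaDelta.preimage {α β : Type*} [TopologicalSpace α] [TopologicalSpace β]
    {f : α → β} (hf : Continuous f) {t : Set β} (ht : IsFSigmaDelta t) :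
    IsFSigmaDelta (f ⁻¹' t) := by
  obtain ⟨F, hF, rfl⟩ := ht
  refine ⟨fun n m => f ⁻¹' F n m, fun n m => (hF n m).preimage hf, ?_⟩
  simp only [preimage_iInter, preimage_iUnion]

theorem fSigmaDelta_of_smaller_compactification_general {cX dX : Type*}
    [TopologicalSpace cX] [T2Space cX]
    [TopologicalSpace dX]
    (X : Set cX) (hXdense : Dense X)
    (f : cX → dX) (hf : Continuous f)
    (hemb : IsEmbedding (fun x : X => f x))
    (hF : IsFSigmaDelta (f '' X)) :
    IsFSigmaDelta X := by
  rw [← hXdense.preimage_image_eq_of_isInducing_domRestrict hf hemb.isInducing]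
  exact hF.preimage hf

/-- If `X` is `F_σδ` in a compactification `dX`, it is `F_σδ` in any larger
compactification `cX`. -/
theorem fSigmaDelta_of_smaller_compactification {cX dX : Type*}
    [TopologicalSpace cX] [CompactSpace cX] [T2Space cX]
    [TopologicalSpace dX] [CompactSpace dX] [T2Space dX]
    (X : Set cX) (hXdense : Dense X)
    (f : cX → dX) (hf : Continuous f) (hsurj : Function.Surjective f)
    (hemb : IsEmbedding (fun x : X => f x)) (hdense : Dense (f '' X))
    (hF : IsFSigmaDelta (f '' X)) :
    IsFSigmaDelta X :=
  fSigmaDelta_of_smaller_compactification_general X hXdense f hf hemb hF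
end

section
/- Let X be dense in a compact Hausdorff space cX with X an F_σδ subset of cX, let φ : cX → dX be a continuous surjection onto a compact Hausdorff space dX restricting to a homeomorphism of X onto a dense subset of dX, and suppose the set of points y ∈ dX whose fiber φ⁻¹(y) is not a singleton is countable. Then φ(X) is an F_σδ subset of dX. -/
/-!
Write `X = ⋂ₙ ⋃ₘ Fₙₘ` with `Fₙₘ` closed. The set `A = ⋂ₙ ⋃ₘ φ(Fₙₘ)` is `F_σδ` in `dX` and contains
`φ(X)`; a point of `A` with a one-point fibre `{x}` has `x ∈ X`, so `A \ φ(X)` is countable. Each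
`y ∉ φ(X)` is removed by an `F_σ` set: `X` is Lindelöf and misses the closed fibre `φ⁻¹(y)`, so by
regularity it lies in an `F_σ` set `T` disjoint from that fibre, and then `φ(X) ⊆ φ(T) ∌ y` with
`φ(T)` again `F_σ`. Hence `φ(X) = A ∩ ⋂_{y ∈ A \ φ(X)} φ(T_y)` is `F_σδ`.
-/

open Set Topology Filter

theorem Set.mem_image_iInter_of_preimage_subsingleton {α β ι : Type*} [Nonempty ι] {f : α → β}
    {s : ι → Set α} {y : β} (hy : (f ⁻¹' {y}).Subsingleton) (hmem : ∀ i, y ∈ f '' s i) :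
    y ∈ f '' ⋂ i, s i := by
  choose x hxs hxy using hmem
  obtain ⟨i₀⟩ := ‹Nonempty ι›
  refine ⟨x i₀, mem_iInter.2 fun i => ?_, hxy i₀⟩
  rw [hy (hxy i₀) (hxy i)]
  exact hxs i

theorem exists_seq_succ_eq_inter {α ι : Type*} {P : Set α → Prop} (F : ℕ → ι → Set α)
    (huniv : P univ) (hstep : ∀ n A, P A → ∃ m, P (A ∩ F n m)) :
    ∃ A : ℕ → Set α, (∀ n, P (A n)) ∧ ∀ n, ∃ m, A (n + 1) = A n ∩ F n m := by
  choose m hm using hstep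
  let A : ℕ → {A // P A} := fun n =>
    Nat.rec ⟨univ, huniv⟩ (fun n A => ⟨A.1 ∩ F n (m n A.1 A.2), hm _ _ _⟩) n
  exact ⟨fun n => (A n).1, fun n => (A n).2, fun n => ⟨_, rfl⟩⟩

section FSigmaDelta

variable {α β : Type*} [TopologicalSpace α] [TopologicalSpace β]

theorem isFSigma_iUnion_of_isClosed {ι : Type*} [Countable ι] {C : ι → Set α}
    (hC : ∀ i, IsClosed (C i)) : IsFSigma (⋃ i, C i) := by
  rcases isEmpty_or_nonempty ι with hι | hι
  · exact ⟨fun _ => ∅, fun _ => isClosed_empty, by simp⟩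
  · obtain ⟨e, he⟩ := exists_surjective_nat ι
    exact ⟨C ∘ e, fun n => hC (e n), he.iUnion_comp C |>.symm⟩

theorem IsFSigma.image [CompactSpace α] [T2Space β] {f : α → β} (hf : Continuous f) {s : Set α}
    (hs : IsFSigma s) : IsFSigma (f '' s) := by
  obtain ⟨F, hF, rfl⟩ := hs
  rw [image_iUnion]
  exact ⟨_, fun n => ((hF n).isCompact.image hf).isClosed, rfl⟩

theorem IsFSigma.isFSigmaDelta {s : Set α} (hs : IsFSigma s) : IsFSigmaDelta s := by
  obtain ⟨F, hF, rfl⟩ := hs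
  exact ⟨fun _ => F, fun _ => hF, (iInter_const _).symm⟩

theorem IsFSigmaDelta.iInter {ι : Type*} [Countable ι] {s : ι → Set α}
    (hs : ∀ i, IsFSigmaDelta (s i)) : IsFSigmaDelta (⋂ i, s i) := by
  rcases isEmpty_or_nonempty ι with hι | hι
  · exact ⟨fun _ _ => univ, fun _ _ => isClosed_univ,
      by simp only [iInter_of_empty, iUnion_const, iInter_const]⟩
  choose F hF hsF using hs
  obtain ⟨e, he⟩ := exists_surjective_nat (ι × ℕ)
  refine ⟨fun k => F (e k).1 (e k).2, fun k => hF _ _, ?_⟩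
  rw [he.iInter_comp (fun p => ⋃ m, F p.1 p.2 m)]
  ext x
  simp [hsF, Prod.forall]

theorem IsFSigmaDelta.biInter {ι : Type*} {t : Set ι} (ht : t.Countable) {s : ι → Set α}
    (hs : ∀ i ∈ t, IsFSigmaDelta (s i)) : IsFSigmaDelta (⋂ i ∈ t, s i) := by
  have := ht.to_subtype
  rw [biInter_eq_iInter]
  exact IsFSigmaDelta.iInter fun i => hs i i.2

theorem IsFSigmaDelta.inter {s t : Set α} (hs : IsFSigmaDelta s) (ht : IsFSigmaDelta t) :
    IsFSigmaDelta (s ∩ t) := by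
  rw [inter_eq_iInter]
  exact IsFSigmaDelta.iInter fun b => by cases b <;> assumption

theorem IsFSigmaDelta.of_countable_diff {s t : Set α} (hs : IsFSigmaDelta s) (hts : t ⊆ s)
    (hcount : (s \ t).Countable)
    (hsep : ∀ y ∈ s \ t, ∃ T, IsFSigma T ∧ t ⊆ T ∧ y ∉ T) : IsFSigmaDelta t := by
  choose! T hT htT hyT using hsep
  have ht : t = s ∩ ⋂ y ∈ s \ t, T y := by
    refine Subset.antisymm (subset_inter hts (subset_iInter₂ htT)) fun z ⟨hzs, hzT⟩ => ?_
    by_contra hzt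
    exact hyT z ⟨hzs, hzt⟩ (mem_iInter₂.1 hzT z ⟨hzs, hzt⟩)
  rw [ht]
  exact hs.inter (.biInter hcount fun y hy => (hT y hy).isFSigmaDelta)

/- Refine `f` stage by stage by a piece `F n m` that it still meets (possible by the countable
intersection property); a cluster point of the refined filters lies in every chosen piece. -/
theorem IsFSigmaDelta.isLindelof [CompactSpace α] {s : Set α} (hs : IsFSigmaDelta s) :
    IsLindelof s := by
  obtain ⟨F, hF, rfl⟩ := hs
  intro f _ _ hfs
  have hstep : ∀ n A, NeBot (f ⊓ 𝓟 A) → ∃ m, NeBot (f ⊓ 𝓟 (A ∩ F n m)) := by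
    intro n A hA
    by_contra! h
    simp only [inf_principal_eq_bot] at h
    have hcover : ⋃ m, F n m ∈ f := mem_of_superset (hfs (mem_principal_self _)) (iInter_subset _ n)
    refine hA.ne (inf_principal_eq_bot.2 ?_)
    filter_upwards [countable_iInter_mem.2 h, hcover] with x hx hxF
    obtain ⟨m, hm⟩ := mem_iUnion.1 hxF
    exact fun hxA => mem_iInter.1 hx m ⟨hxA, hm⟩
  obtain ⟨A, hA, hAsucc⟩ := exists_seq_succ_eq_inter F (by simpa) hstep
  choose m hm using hAsucc
  have hanti : Antitone A := antitone_nat_of_succ_le fun n => (hm n).symm ▸ inter_subset_left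
  have : NeBot (⨅ n, f ⊓ 𝓟 (A n)) :=
    iInf_neBot_of_directed' (Antitone.directed_ge fun _ _ h => inf_le_inf_left _ <|
      principal_mono.2 (hanti h)) hA
  obtain ⟨x, hx⟩ := exists_clusterPt_of_compactSpace (⨅ n, f ⊓ 𝓟 (A n))
  refine ⟨x, mem_iInter.2 fun n => mem_iUnion.2 ⟨m n, ?_⟩,
    hx.mono (iInf_le_of_le 0 inf_le_left)⟩
  have : ClusterPt x (𝓟 (F n (m n))) := hx.mono <| iInf_le_of_le (n + 1) <|
    inf_le_right.trans (principal_mono.2 ((hm n).symm ▸ inter_subset_right))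
  exact (hF n (m n)).closure_eq ▸ this.mem_closure

theorem IsLindelof.exists_isFSigma_superset_disjoint [RegularSpace α] {s K : Set α}
    (hs : IsLindelof s) (hK : IsClosed K) (hsK : Disjoint s K) :
    ∃ T, IsFSigma T ∧ s ⊆ T ∧ Disjoint T K := by
  have hnhds : ∀ x ∈ s, ∃ C ∈ 𝓝 x, IsClosed C ∧ C ⊆ Kᶜ := fun x hx =>
    exists_mem_nhds_isClosed_subset (hK.isOpen_compl.mem_nhds (hsK.notMem_of_mem_left hx))
  choose! C hCx hC hCK using hnhds
  obtain ⟨t, htc, hts, hst⟩ := hs.elim_nhds_subcover C hCx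
  have := htc.to_subtype
  rw [biUnion_eq_iUnion] at hst
  refine ⟨⋃ x : t, C x, isFSigma_iUnion_of_isClosed fun x => hC x (hts x x.2), hst, ?_⟩
  exact disjoint_iUnion_left.2 fun x => subset_compl_iff_disjoint_right.1 (hCK x (hts x x.2))

end FSigmaDelta

theorem fSigmaDelta_of_countably_many_nontrivial_fibers_general {cX dX : Type*}
    [TopologicalSpace cX] [CompactSpace cX] [T2Space cX]
    [TopologicalSpace dX] [T2Space dX]
    (X : Set cX) (hXfsd : IsFSigmaDelta X)
    (φ : cX → dX) (hφ : Continuous φ)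
    (hcnt : {y : dX | ¬ (φ ⁻¹' {y}).Subsingleton}.Countable) :
    IsFSigmaDelta (φ '' X) := by
  have hX : IsLindelof X := hXfsd.isLindelof
  obtain ⟨F, hF, rfl⟩ := hXfsd
  have hA : IsFSigmaDelta (⋂ n, φ '' ⋃ m, F n m) :=
    .iInter fun n => (isFSigma_iUnion_of_isClosed (hF n)).image hφ |>.isFSigmaDelta
  refine hA.of_countable_diff (subset_iInter fun n => image_mono (iInter_subset _ n))
    (hcnt.mono fun y ⟨hyA, hyX⟩ => ?_) fun y ⟨_, hyX⟩ => ?_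
  · exact fun hy => hyX (mem_image_iInter_of_preimage_subsingleton hy (mem_iInter.1 hyA))
  · have hdisj : Disjoint (⋂ n, ⋃ m, F n m) (φ ⁻¹' {y}) :=
      disjoint_left.2 fun x hx hxy => hyX ⟨x, hx, hxy⟩
    obtain ⟨T, hT, hXT, hTy⟩ :=
      hX.exists_isFSigma_superset_disjoint (isClosed_singleton.preimage hφ) hdisj
    exact ⟨φ '' T, hT.image hφ, image_mono hXT,
      fun ⟨x, hx, hxy⟩ => disjoint_left.1 hTy hx hxy⟩

/-- If `X` is `F_σδ` in a compactification `cX`, `dX ⪯ cX` is witnessed by `φ`, and only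
countably many fibers of `φ` are non-singletons, then `X` is `F_σδ` in `dX`. -/
theorem fSigmaDelta_of_countably_many_nontrivial_fibers {cX dX : Type*}
    [TopologicalSpace cX] [CompactSpace cX] [T2Space cX]
    [TopologicalSpace dX] [CompactSpace dX] [T2Space dX]
    (X : Set cX) (hXdense : Dense X) (hXfsd : IsFSigmaDelta X)
    (φ : cX → dX) (hφ : Continuous φ) (hsurj : Function.Surjective φ)
    (hemb : IsEmbedding (fun x : X => φ x)) (hdense : Dense (φ '' X))
    (hcnt : {y : dX | ¬ (φ ⁻¹' {y}).Subsingleton}.Countable) :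
    IsFSigmaDelta (φ '' X) :=
  fSigmaDelta_of_countably_many_nontrivial_fibers_general X hXfsd φ hφ hcnt
end

section
/- Let X be a dense subspace of a compact Hausdorff space cX and let (𝓕_n) be a complete sequence of covers of X. If F_n ∈ 𝓕_n satisfy F_1 ⊇ F_2 ⊇ ⋯ (and all F_n are nonempty), then the intersection of the closures of the F_n taken in cX is contained in X. -/
open Set Topology Filter

/-- A sequence of covers of `X` is complete if every (proper) filter on `X` containing
a member of each cover has an accumulation (cluster) point in `X`. -/
def CompleteCoverSeq {X : Type*} [TopologicalSpace X] (𝓕 : ℕ → Set (Set X)) : Prop :=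
  (∀ n, ⋃₀ 𝓕 n = Set.univ) ∧
    ∀ F : Filter X, F.NeBot → (∀ n, ∃ A ∈ 𝓕 n, A ∈ F) → ∃ x : X, ClusterPt x F

/-!
If `y` lies in every `closure F n`, then, `F` being decreasing, the filter on `X` generated by
the `F n` and the traces of the neighbourhoods of `y` is proper. It contains a member of each
cover, so completeness gives it a cluster point `x ∈ X`; since the filter converges to `y` in
`cX`, the Hausdorff property forces `x = y`.
-/

theorem Antitone.mapClusterPt_iInf_principal {α β : Type*} [TopologicalSpace β] {f : α → β}
    {s : ℕ → Set α} (hs : Antitone s) {y : β} (hy : ∀ n, y ∈ closure (f '' s n)) :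
    MapClusterPt y (⨅ n, 𝓟 (s n)) f :=
  ((hasBasis_iInf_principal hs.directed_ge).map f).clusterPt_iff_forall_mem_closure.2
    fun n _ => hy n

theorem ClusterPt.eq_of_tendsto {α β : Type*} [TopologicalSpace α] [TopologicalSpace β]
    [T2Space β] {f : α → β} {L : Filter α} {x : α} {y : β} (hx : ClusterPt x L)
    (hf : ContinuousAt f x) (hL : Tendsto f L (𝓝 y)) : f x = y :=
  eq_of_nhds_neBot ((hx.map hf tendsto_map).mono hL)

theorem iInter_closure_subset_of_completeCoverSeq_general {cX : Type*} [TopologicalSpace cX]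
    [T2Space cX] (X : Set cX)
    (𝓕 : ℕ → Set (Set X)) (h : CompleteCoverSeq 𝓕)
    (F : ℕ → Set X) (hF : ∀ n, F n ∈ 𝓕 n) (hmono : ∀ n, F (n + 1) ⊆ F n) :
    ⋂ n, closure ((↑) '' F n : Set cX) ⊆ X := by
  intro y hy
  set G : Filter X := comap (↑) (𝓝 y) ⊓ ⨅ n, 𝓟 (F n)
  have hG : G.NeBot := neBot_inf_comap_iff_map'.2 <|
    (antitone_nat_of_succ_le hmono).mapClusterPt_iInf_principal (mem_iInter.1 hy)
  obtain ⟨x, hx⟩ := h.2 G hG fun n =>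
    ⟨F n, hF n, mem_inf_of_right (mem_iInf_of_mem n (mem_principal_self _))⟩
  have hxy : (x : cX) = y :=
    hx.eq_of_tendsto continuous_subtype_val.continuousAt (tendsto_comap.mono_left inf_le_left)
  exact hxy ▸ x.2

/-- If `(𝓕 n)` is a complete sequence of covers of a dense subspace `X` of a compact
Hausdorff space `cX` and `F n ∈ 𝓕 n` is a decreasing sequence of nonempty sets, then the
intersection of the closures (in `cX`) of the `F n` is contained in `X`. -/
theorem iInter_closure_subset_of_completeCoverSeq {cX : Type*} [TopologicalSpace cX]
    [CompactSpace cX] [T2Space cX] (X : Set cX) (hXdense : Dense X)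
    (𝓕 : ℕ → Set (Set X)) (h : CompleteCoverSeq 𝓕)
    (F : ℕ → Set X) (hF : ∀ n, F n ∈ 𝓕 n) (hmono : ∀ n, F (n + 1) ⊆ F n)
    (hne : ∀ n, (F n).Nonempty) :
    ⋂ n, closure ((↑) '' F n : Set cX) ⊆ X :=
  iInter_closure_subset_of_completeCoverSeq_general X 𝓕 h F hF hmono
end

section
/- Every hereditarily Lindelöf regular space that admits a complete sequence of countable closed covers admits a complete sequence of countable disjoint F_σ covers. -/
/-!
Disjointify an enumeration `F₀, F₁, …` of each closed cover into the pieces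
`Fₖ \ (F₀ ∪ ⋯ ∪ Fₖ₋₁)`. Each piece is a closed set intersected with an open one, and in a
regular hereditarily Lindelöf space every open set is a countable union of closed
neighbourhoods, so the pieces are `F_σ`. Every piece lies in a member of the original cover,
so a filter containing a member of each new cover contains a member of each old one, and
completeness is inherited.
-/

open Set Topology Filter

section

variable {X : Type*} [TopologicalSpace X]

-- `∅` is inserted so that the family is nonempty, hence the range of a sequence.
theorem exists_isClosed_seq_range_eq_insert_empty {s : Set (Set X)} (hs : s.Countable)
    (hcl : ∀ C ∈ s, IsClosed C) :
    ∃ f : ℕ → Set X, (∀ n, IsClosed (f n)) ∧ range f = insert ∅ s := by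
  obtain ⟨f, hf⟩ := (hs.insert ∅).exists_eq_range (insert_nonempty _ _)
  refine ⟨f, fun n => ?_, hf.symm⟩
  rcases (hf ▸ mem_range_self n : f n ∈ insert ∅ s) with hn | hn
  · exact hn ▸ isClosed_empty
  · exact hcl _ hn

theorem isFSigma_sUnion {s : Set (Set X)} (hs : s.Countable) (hcl : ∀ C ∈ s, IsClosed C) :
    IsFSigma (⋃₀ s) := by
  obtain ⟨f, hfcl, hf⟩ := exists_isClosed_seq_range_eq_insert_empty hs hcl
  exact ⟨f, hfcl, by rw [← sUnion_range, hf, sUnion_insert, empty_union]⟩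

theorem IsClosed.inter_isFSigma {A B : Set X} (hA : IsClosed A) (hB : IsFSigma B) :
    IsFSigma (A ∩ B) := by
  obtain ⟨F, hF, rfl⟩ := hB
  exact ⟨fun n => A ∩ F n, fun n => hA.inter (hF n), inter_iUnion A F⟩

theorem IsOpen.isFSigma [RegularSpace X] [HereditarilyLindelofSpace X] {U : Set X}
    (hU : IsOpen U) : IsFSigma U := by
  choose C hCnhds hCcl hCsub using fun x : U => exists_mem_nhds_isClosed_subset (hU.mem_nhds x.2)
  obtain ⟨t, htc, ht⟩ := eq_open_union_countable (fun x : U => interior (C x))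
    fun _ => isOpen_interior
  have hUt : U = ⋃₀ (C '' t) := by
    refine Subset.antisymm (fun y hy => ?_)
      (sUnion_subset (forall_mem_image.2 fun x _ => hCsub x))
    have hy' : y ∈ ⋃ x ∈ t, interior (C x) :=
      ht ▸ mem_iUnion.2 ⟨⟨y, hy⟩, mem_interior_iff_mem_nhds.2 (hCnhds ⟨y, hy⟩)⟩
    obtain ⟨x, hxt, hyx⟩ := mem_iUnion₂.1 hy'
    exact ⟨C x, mem_image_of_mem C hxt, interior_subset hyx⟩
  rw [hUt]
  exact isFSigma_sUnion (htc.image C) (forall_mem_image.2 fun x _ => hCcl x)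

theorem isFSigma_disjointed [RegularSpace X] [HereditarilyLindelofSpace X] {f : ℕ → Set X}
    (hf : ∀ n, IsClosed (f n)) (k : ℕ) : IsFSigma (disjointed f k) := by
  rw [disjointed_eq_inter_compl]
  exact (hf k).inter_isFSigma
    ((finite_Iio k).isOpen_biInter fun i _ => (hf i).isOpen_compl).isFSigma

theorem exists_pairwiseDisjoint_isFSigma_refinement [RegularSpace X]
    [HereditarilyLindelofSpace X] {s : Set (Set X)} (hs : s.Countable)
    (hcl : ∀ C ∈ s, IsClosed C) :
    ∃ t : Set (Set X), t.Countable ∧ ⋃₀ t = ⋃₀ s ∧ (∀ A ∈ t, IsFSigma A) ∧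
      t.PairwiseDisjoint id ∧ ∀ A ∈ t, ∃ C ∈ s, A ⊆ C := by
  obtain ⟨f, hfcl, hf⟩ := exists_isClosed_seq_range_eq_insert_empty hs hcl
  have hmem : ∀ n, f n ∈ insert ∅ s := fun n => hf ▸ mem_range_self n
  refine ⟨range (disjointed f) \ {∅}, (countable_range _).mono sdiff_subset, ?_, ?_,
    (disjoint_disjointed f).range_pairwise.mono sdiff_subset, ?_⟩
  · rw [sUnion_sdiff_singleton_empty, sUnion_range, iUnion_disjointed, ← sUnion_range, hf,
      sUnion_insert, empty_union]
  · rintro _ ⟨⟨k, rfl⟩, -⟩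
    exact isFSigma_disjointed hfcl k
  · rintro _ ⟨⟨k, rfl⟩, hne⟩
    refine ⟨f k, (hmem k).resolve_left fun hk => hne ?_, disjointed_subset f k⟩
    exact subset_eq_empty (disjointed_subset f k) hk

theorem CompleteCoverSeq.of_refinement {𝓕 𝓓 : ℕ → Set (Set X)} (h : CompleteCoverSeq 𝓕)
    (hcov : ∀ n, ⋃₀ 𝓓 n = univ) (href : ∀ n, ∀ A ∈ 𝓓 n, ∃ C ∈ 𝓕 n, A ⊆ C) :
    CompleteCoverSeq 𝓓 := by
  refine ⟨hcov, fun F hF hmem => h.2 F hF fun n => ?_⟩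
  obtain ⟨A, hA, hAF⟩ := hmem n
  obtain ⟨C, hC, hAC⟩ := href n A hA
  exact ⟨C, hC, mem_of_superset hAF hAC⟩

end

/-- Every hereditarily Lindelöf regular space with a complete sequence of countable
closed covers has a complete sequence of countable disjoint `F_σ` covers. -/
theorem disjoint_FSigma_covers_of_hereditarilyLindelof {X : Type*} [TopologicalSpace X]
    [RegularSpace X] [HereditarilyLindelofSpace X]
    (𝓕 : ℕ → Set (Set X)) (h : CompleteCoverSeq 𝓕)
    (hcnt : ∀ n, (𝓕 n).Countable) (hcl : ∀ n, ∀ A ∈ 𝓕 n, IsClosed A) :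
    ∃ 𝓓 : ℕ → Set (Set X), CompleteCoverSeq 𝓓 ∧ (∀ n, (𝓓 n).Countable) ∧
      (∀ n, ∀ A ∈ 𝓓 n, IsFSigma A) ∧
      ∀ n, ∀ A ∈ 𝓓 n, ∀ B ∈ 𝓓 n, A ≠ B → Disjoint A B := by
  choose 𝓓 hcnt' hunion hFσ hdisj href using
    fun n => exists_pairwiseDisjoint_isFSigma_refinement (hcnt n) (hcl n)
  exact ⟨𝓓, h.of_refinement (fun n => (hunion n).trans (h.1 n)) href, hcnt', hFσ,
    fun n _ hA _ hB hAB => hdisj n hA hB hAB⟩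
end

section
/- Let X be a dense Lindelöf subspace of a compact Hausdorff space cX, and let D, E ⊆ X be disjoint sets that are both closed in X. Then there exists an F_σ subset H of cX with X ⊆ H ⊆ cX \ (cl(D) ∩ cl(E)), where closures are taken in cX. -/
/-!
A point of `X` in `cl D ∩ cl E` would lie in `D ∩ E`, since `D` and `E` are closed in `X`; so `X`
lies in the open set `(cl D ∩ cl E)ᶜ`. In the regular space `cX` every point of `X` has a closed
neighbourhood inside that open set, and countably many of them cover the Lindelöf set `X`.
-/

open Set Topology Filter

section

variable {α : Type*} [TopologicalSpace α]

theorem isFSigma_iff_isGδ_compl {A : Set α} : IsFSigma A ↔ IsGδ Aᶜ := by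
  rw [isGδ_iff_eq_iInter_nat]
  constructor
  · rintro ⟨F, hF, rfl⟩
    exact ⟨fun n => (F n)ᶜ, fun n => (hF n).isOpen_compl, compl_iUnion F⟩
  · rintro ⟨G, hG, hAG⟩
    refine ⟨fun n => (G n)ᶜ, fun n => (hG n).isClosed_compl, ?_⟩
    rw [← compl_iInter, ← hAG, compl_compl]

theorem IsFSigma.biUnion_of_isClosed {ι : Type*} {I : Set ι} (hI : I.Countable)
    {F : ι → Set α} (hF : ∀ i ∈ I, IsClosed (F i)) : IsFSigma (⋃ i ∈ I, F i) := by
  rw [isFSigma_iff_isGδ_compl, compl_iUnion₂]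
  exact IsGδ.biInter_of_isOpen hI fun i hi => (hF i hi).isOpen_compl

theorem IsLindelof.exists_isFSigma_subset_of_subset_isOpen [RegularSpace α] {s U : Set α}
    (hs : IsLindelof s) (hU : IsOpen U) (hsU : s ⊆ U) :
    ∃ H : Set α, IsFSigma H ∧ s ⊆ H ∧ H ⊆ U := by
  have hnhds : ∀ x ∈ s, ∃ N ∈ 𝓝 x, IsClosed N ∧ N ⊆ U := fun x hx =>
    exists_mem_nhds_isClosed_subset (hU.mem_nhds (hsU hx))
  choose! N hN_nhds hN_closed hNU using hnhds
  obtain ⟨t, htc, hts, hcover⟩ := hs.elim_nhds_subcover N hN_nhds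
  exact ⟨⋃ x ∈ t, N x, .biUnion_of_isClosed htc fun x hx => hN_closed x (hts x hx), hcover,
    iUnion₂_subset fun x hx => hNU x (hts x hx)⟩

theorem closure_inter_subset_of_isClosed_preimage_val {X D : Set α} (hD : D ⊆ X)
    (hDc : IsClosed ((↑) ⁻¹' D : Set X)) : closure D ∩ X ⊆ D := by
  rintro x ⟨hx_cl, hxX⟩
  have hx : (⟨x, hxX⟩ : X) ∈ closure ((↑) ⁻¹' D : Set X) := by
    rwa [IsEmbedding.subtypeVal.closure_eq_preimage_closure_image, Subtype.image_preimage_coe,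
      inter_eq_right.mpr hD]
  exact hDc.closure_eq.subset hx

end

theorem FSigma_separation_from_closures_general {cX : Type*} [TopologicalSpace cX]
    [CompactSpace cX] [T2Space cX] (X : Set cX)
    (hXlind : IsLindelof X) (D E : Set cX) (hD : D ⊆ X) (hE : E ⊆ X)
    (hdisj : Disjoint D E)
    (hDc : IsClosed ((↑) ⁻¹' D : Set ↥X)) (hEc : IsClosed ((↑) ⁻¹' E : Set ↥X)) :
    ∃ H : Set cX, IsFSigma H ∧ X ⊆ H ∧ H ⊆ (closure D ∩ closure E)ᶜ := by
  have hX_compl : X ⊆ (closure D ∩ closure E)ᶜ := fun x hxX ⟨hxD, hxE⟩ =>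
    hdisj.le_bot ⟨closure_inter_subset_of_isClosed_preimage_val hD hDc ⟨hxD, hxX⟩,
      closure_inter_subset_of_isClosed_preimage_val hE hEc ⟨hxE, hxX⟩⟩
  exact hXlind.exists_isFSigma_subset_of_subset_isOpen
    (isClosed_closure.inter isClosed_closure).isOpen_compl hX_compl

/-- For a dense Lindelöf subspace `X` of a compact Hausdorff space and disjoint sets
`D, E ⊆ X` closed in `X`, there is an `F_σ` set separating `X` from `cl D ∩ cl E`. -/
theorem FSigma_separation_from_closures {cX : Type*} [TopologicalSpace cX]
    [CompactSpace cX] [T2Space cX] (X : Set cX) (hXdense : Dense X)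
    (hXlind : IsLindelof X) (D E : Set cX) (hD : D ⊆ X) (hE : E ⊆ X)
    (hdisj : Disjoint D E)
    (hDc : IsClosed ((↑) ⁻¹' D : Set ↥X)) (hEc : IsClosed ((↑) ⁻¹' E : Set ↥X)) :
    ∃ H : Set cX, IsFSigma H ∧ X ⊆ H ∧ H ⊆ (closure D ∩ closure E)ᶜ :=
  FSigma_separation_from_closures_general X hXlind D E hD hE hdisj hDc hEc
end

section
/- If a Hausdorff topological space admits a complete sequence of covers each of which is countable, then the space is Lindelöf. -/
open Set Topology Filter

/-!
Let `f` be a proper filter with the countable intersection property. If `f` missed every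
member `A` of a countable cover, the complements `Aᶜ` and hence their intersection `∅` would
lie in `f`; so some member of the cover is compatible with `f`. Applying this to the covers
`𝓕 0, 𝓕 1, …` in turn yields a decreasing chain `B n` compatible with `f` whose `(n + 1)`-st
set lies in a member of `𝓕 n`. The filter generated by `f` and the chain is proper and meets
every cover, so completeness gives it a cluster point, which is a cluster point of `f`.
-/

namespace Filter

variable {X : Type*}

theorem exists_mem_inf_principal_neBot_of_sUnion_eq_univ (f : Filter X) [f.NeBot]
    [CountableInterFilter f] {𝓒 : Set (Set X)} (h𝓒 : 𝓒.Countable) (hcov : ⋃₀ 𝓒 = univ) :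
    ∃ A ∈ 𝓒, (f ⊓ 𝓟 A).NeBot := by
  by_contra! hbot
  have hcompl : (⋃₀ 𝓒)ᶜ ∈ f := by
    rw [compl_sUnion, countable_sInter_mem (h𝓒.image _)]
    rintro _ ⟨A, hA, rfl⟩
    exact inf_principal_eq_bot.1 (hbot A hA)
  rw [hcov, compl_univ] at hcompl
  exact f.empty_notMem hcompl

theorem exists_antitone_inf_principal_neBot_subset_mem_covers (f : Filter X) [f.NeBot]
    [CountableInterFilter f] (𝓕 : ℕ → Set (Set X)) (hcnt : ∀ n, (𝓕 n).Countable)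
    (hcov : ∀ n, ⋃₀ 𝓕 n = univ) :
    ∃ B : ℕ → Set X, Antitone B ∧ (∀ n, (f ⊓ 𝓟 (B n)).NeBot) ∧
      ∀ n, ∃ A ∈ 𝓕 n, B (n + 1) ⊆ A := by
  have step (n : ℕ) (B : {B : Set X // (f ⊓ 𝓟 B).NeBot}) :
      ∃ A ∈ 𝓕 n, (f ⊓ 𝓟 (B.1 ∩ A)).NeBot := by
    have := B.2
    simpa only [inf_assoc, inf_principal] using
      exists_mem_inf_principal_neBot_of_sUnion_eq_univ (f ⊓ 𝓟 B.1) (hcnt n) (hcov n)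
  choose A hA hne using step
  let chain : ℕ → {B : Set X // (f ⊓ 𝓟 B).NeBot} :=
    fun n => n.rec ⟨univ, by simpa only [principal_univ, inf_top_eq]⟩
      fun k B => ⟨B.1 ∩ A k B, hne k B⟩
  exact ⟨fun n => (chain n).1, antitone_nat_of_succ_le fun _ => inter_subset_left,
    fun n => (chain n).2, fun n => ⟨A n (chain n), hA n _, inter_subset_right⟩⟩

end Filter

theorem lindelof_of_completeCoverSeq_general {X : Type*} [TopologicalSpace X]
    (𝓕 : ℕ → Set (Set X)) (h : CompleteCoverSeq 𝓕) (hcnt : ∀ n, (𝓕 n).Countable) :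
    LindelofSpace X := by
  refine ⟨fun f _ _ _ => ?_⟩
  obtain ⟨B, hBanti, hBne, hBsub⟩ :=
    exists_antitone_inf_principal_neBot_subset_mem_covers f 𝓕 hcnt h.1
  let g := ⨅ n, f ⊓ 𝓟 (B n)
  have hg : g.NeBot :=
    iInf_neBot_of_directed' (Antitone.directed_ge fun _ _ hmn => inf_le_inf_left f
      (principal_mono.2 (hBanti hmn))) hBne
  have hg_covers (n : ℕ) : ∃ A ∈ 𝓕 n, A ∈ g := by
    obtain ⟨A, hA, hBA⟩ := hBsub n
    have hB : B (n + 1) ∈ g := mem_iInf_of_mem (n + 1) (mem_inf_of_right (mem_principal_self _))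
    exact ⟨A, hA, mem_of_superset hB hBA⟩
  obtain ⟨x, hx⟩ := h.2 g hg hg_covers
  exact ⟨x, mem_univ x, hx.mono (iInf_le_of_le 0 inf_le_left)⟩

/-- A Hausdorff space with a complete sequence of countable covers is Lindelöf. -/
theorem lindelof_of_completeCoverSeq {X : Type*} [TopologicalSpace X] [T2Space X]
    (𝓕 : ℕ → Set (Set X)) (h : CompleteCoverSeq 𝓕) (hcnt : ∀ n, (𝓕 n).Countable) :
    LindelofSpace X :=
  lindelof_of_completeCoverSeq_general 𝓕 h hcnt
end

section
/- A topological space X is compact if and only if X is closed in every Hausdorff topological space in which it is embedded (i.e., X is absolutely closed among Hausdorff spaces). -/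
open Set Topology Filter

/-- A Tychonoff space is compact iff it is closed in every Hausdorff space in which it
is embedded. -/
theorem compact_iff_absolutely_closed (X : Type u) [TopologicalSpace X] [T35Space X] :
    CompactSpace X ↔
      ∀ (Y : Type u) [TopologicalSpace Y] [T2Space Y] (e : X → Y),
        IsEmbedding e → IsClosed (Set.range e) := by
  refine ⟨fun _ Y _ _ e he ↦ (isCompact_range he.continuous).isClosed, fun h ↦ ?_⟩
  -- A Tychonoff space embeds in its Stone–Čech compactification, where it must then be closed.
  exact (IsClosedEmbedding.mk isEmbedding_stoneCechUnit
    (h (StoneCech X) stoneCechUnit isEmbedding_stoneCechUnit)).compactSpace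
end
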